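/- arXiv:1305.0943 — 5 statements merged into one kernel-verified Lean document; each statement's English description precedes it below -/
import Mathlib

section
/- Let t ≥ 2 and let n_1,…,n_{2t−1} be nonnegative integers each divisible by t. Then there exists a finite multiset of t-approval votes over 2t candidates c_0,…,c_{2t−1} such that the approval score of c_i minus the approval score of c_0 equals n_i for each i ∈ {1,…,2t−1} (in particular c_0 has minimum score). Moreover this can be achieved with (2t−1)(Σ n_i)/t votes. -/
/-!
Identify the candidates other than `i` with `Fin (2t-1)` and let the "block" of `i` consist of the
`2t-1` votes `{i} ∪ W`, where `W` runs over the cyclic windows of length `t-1`. In this block `i`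
is approved `2t-1` times and every other candidate `t-1` times, so `i` gains exactly `t` on
everybody else. Taking `n i / t` copies of the block of each `i` gives the required score
differences with `(2t-1) · Σ (n i / t)` votes.
-/

open Finset

section CyclicWindow

variable {m : ℕ}

def cyclicWindow (k : ℕ) (j : Fin m) : Finset (Fin m) := {c | (c - j).val < k}

lemma card_cyclicWindow {k : ℕ} (hk : k ≤ m) (j : Fin m) : #(cyclicWindow k j) = k := by
  have := NeZero.of_pos j.pos
  have : cyclicWindow k j =
      ({r | r.val < k} : Finset (Fin m)).map (Equiv.addRight j).toEmbedding := by
    ext c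
    simp [cyclicWindow, sub_eq_add_neg]
  rw [this, card_map, Fin.card_filter_val_lt, min_eq_right hk]

lemma card_filter_mem_cyclicWindow {k : ℕ} (hk : k ≤ m) (c : Fin m) :
    #{j | c ∈ cyclicWindow k j} = k := by
  have := NeZero.of_pos c.pos
  have : ({j | c ∈ cyclicWindow k j} : Finset (Fin m)) =
      ({r | r.val < k} : Finset (Fin m)).map (Equiv.subLeft c).toEmbedding := by
    ext j
    simp [cyclicWindow, neg_add_eq_sub]
  rw [this, card_map, Fin.card_filter_val_lt, min_eq_right hk]

end CyclicWindow

section ApprovalBlock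

variable {α : Type*} [Fintype α] [DecidableEq α]

lemma exists_approvalBlock {m k : ℕ} (hk : k ≤ m) (hα : Fintype.card α = m + 1) (i : α) :
    ∃ B : Multiset (Finset α), Multiset.card B = m ∧ (∀ v ∈ B, #v = k + 1) ∧
      ∀ c, B.countP (c ∈ ·) = if c = i then m else k := by
  have hcompl : Fintype.card {c // c ≠ i} = m := by
    simp [Fintype.card_subtype_compl, hα]
  set e := (Fintype.equivFinOfCardEq hcompl).symm
  set f : Fin m ↪ α := e.toEmbedding.trans (Function.Embedding.subtype _)
  have hf : ∀ j, f j ≠ i := fun j => (e j).2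
  set vote : Fin m → Finset α := fun j => insert i ((cyclicWindow k j).map f)
  refine ⟨univ.val.map vote, by simp, ?_, ?_⟩
  · simp only [Multiset.mem_map, mem_val, mem_univ, true_and, forall_exists_index,
      forall_apply_eq_imp_iff]
    intro j
    rw [card_insert_of_notMem (by simp [hf]), card_map, card_cyclicWindow hk]
  · intro c
    rw [Multiset.countP_map, ← Finset.filter_val, ← Finset.card_def]
    split_ifs with hc
    · simp [vote, hc]
    · obtain ⟨c, rfl⟩ : ∃ c', f c' = c := ⟨e.symm ⟨c, hc⟩, by simp [f]⟩
      simp only [vote, mem_insert, hf, false_or, mem_map' f, card_filter_mem_cyclicWindow hk]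

theorem exists_approval_votes {m k : ℕ} (hk : k ≤ m) (hα : Fintype.card α = m + 1)
    (a : α → ℕ) :
    ∃ votes : Multiset (Finset α), (∀ v ∈ votes, #v = k + 1) ∧
      (∀ c, votes.countP (c ∈ ·) = (∑ i, a i) * k + a c * (m - k)) ∧
      Multiset.card votes = (∑ i, a i) * m := by
  choose B hcard hsize hcount using exists_approvalBlock hk hα
  refine ⟨∑ i, a i • B i, ?_, ?_, ?_⟩
  · simp only [Multiset.mem_sum, mem_univ, true_and, forall_exists_index]
    exact fun v i hv => hsize i v (Multiset.mem_of_mem_nsmul hv)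
  · intro c
    have hsplit : ∀ i, (if c = i then m else k) = k + if c = i then m - k else 0 := by
      intro i; split_ifs <;> omega
    simp only [← Multiset.coe_countPAddMonoidHom, map_sum, map_nsmul, smul_eq_mul]
    simp only [Multiset.coe_countPAddMonoidHom, hcount, hsplit, mul_add, sum_add_distrib, sum_mul]
    simp
  · simp [Multiset.card_sum, hcard, sum_mul]

end ApprovalBlock

/-- For `t ≥ 2` and nonnegative integers `n i` (for the `2t − 1` candidates
other than candidate `0`), each divisible by `t`, there is a finite multiset of `t`-approval
votes over `2t` candidates such that the approval score of candidate `i` minus the score of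
candidate `0` is exactly `n i`; moreover this is achieved with `(2t−1)·(Σ n_i)/t` votes. -/
theorem stmt1 (t : ℕ) (ht : 2 ≤ t) (n : Fin (2 * t) → ℕ)
    (hn0 : n ⟨0, by omega⟩ = 0) (hdvd : ∀ i, t ∣ n i) :
    ∃ votes : Multiset (Finset (Fin (2 * t))),
      (∀ v ∈ votes, v.card = t) ∧
      (∀ i : Fin (2 * t),
        Multiset.card (votes.filter (fun v => i ∈ v)) =
          Multiset.card (votes.filter (fun v => (⟨0, by omega⟩ : Fin (2 * t)) ∈ v)) + n i) ∧
      Multiset.card votes = (2 * t - 1) * (∑ i, n i) / t := by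
  obtain ⟨votes, hsize, hscore, hcard⟩ := exists_approval_votes (m := 2 * t - 1) (k := t - 1)
    (by omega) (by simp; omega) (fun i => n i / t)
  refine ⟨votes, fun v hv => by rw [hsize v hv]; omega, fun i => ?_, ?_⟩
  · simp only [← Multiset.countP_eq_card_filter, hscore, hn0, Nat.zero_div, zero_mul, add_zero,
      show 2 * t - 1 - (t - 1) = t by omega, Nat.div_mul_cancel (hdvd i)]
  · rw [hcard, Nat.mul_div_assoc _ (dvd_sum fun i _ => hdvd i), Nat.sum_div fun i _ => hdvd i,
      mul_comm]
end

section
/- Fix a t-approval weighted election with registered voters V and unregistered voters W, all of whom approve the preferred candidate p. If some subcollection W' ⊆ W of size ℓ, all of whose votes approve exactly the same set S of t candidates (with p ∈ S), can be added (possibly together with other unregistered voters) to make p a winner, then replacing W' by the ℓ heaviest voters of W approving exactly S (keeping the other added voters fixed) also makes p a winner. -/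
/-- Approval score: total weight of voters approving candidate `c`; each voter is a pair
(weight, approval set). -/
def appScore {C : Type*} [DecidableEq C] (M : Multiset (ℕ × Finset C)) (c : C) : ℕ :=
  (M.map (fun v => if c ∈ v.2 then v.1 else 0)).sum

/-!
Every voter of `W'` or `H` approves exactly `S ∋ p`, so swapping `W'` for `H` changes the scores
of `p` and of every `c ∈ S` by the same amount, and for `c ∉ S` changes only the score of `p`; it
therefore suffices that `H` weighs at least as much as `W'`. That holds because, after cancelling the
voters common to both, the voters left in `W'` lie outside `H` and are matched one-to-one with
the voters left in `H`, each of which is at least as heavy as any voter outside `H`.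
-/

namespace Multiset

theorem sum_map_le_sum_map_of_forall_le_of_card_eq {α β : Type*} [DecidableEq α]
    [AddCommMonoid β] [PartialOrder β] [IsOrderedAddMonoid β] (f : α → β)
    {F A H : Multiset α} (hA : A ≤ F) (hcard : card A = card H)
    (hheavy : ∀ h ∈ H, ∀ w ∈ F - H, f w ≤ f h) :
    (A.map f).sum ≤ (H.map f).sum := by
  have hsplitA : A - H + A ∩ H = A := sub_add_inter A H
  have hsplitH : H - A + A ∩ H = H := by rw [inter_comm]; exact sub_add_inter H A
  have hcard' : card (A - H) = card (H - A) := by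
    have := congrArg card hsplitA
    have := congrArg card hsplitH
    simp only [card_add] at *
    omega
  have hswap : ((A - H).map f).sum ≤ ((H - A).map f).sum := by
    refine sum_le_sum_of_rel_le (rel_of_forall ?_ (by simpa using hcard'))
    simp only [mem_map]
    rintro _ _ ⟨w, hw, rfl⟩ ⟨h, hh, rfl⟩
    exact hheavy h (mem_of_le tsub_le_self hh) w (mem_of_le (tsub_le_tsub_right hA H) hw)
  calc (A.map f).sum = ((A - H).map f).sum + ((A ∩ H).map f).sum := by
        rw [← sum_add, ← map_add, hsplitA]
    _ ≤ ((H - A).map f).sum + ((A ∩ H).map f).sum := by gcongr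
    _ = (H.map f).sum := by rw [← sum_add, ← map_add, hsplitH]

end Multiset

section appScore

variable {C : Type*} [DecidableEq C]

theorem appScore_add (M N : Multiset (ℕ × Finset C)) (c : C) :
    appScore (M + N) c = appScore M c + appScore N c := by
  simp [appScore]

theorem appScore_of_forall_approves_eq {M : Multiset (ℕ × Finset C)} {S : Finset C}
    (hM : ∀ v ∈ M, v.2 = S) (c : C) :
    appScore M c = if c ∈ S then (M.map Prod.fst).sum else 0 := by
  unfold appScore
  split_ifs with hc
  · exact congrArg Multiset.sum <| Multiset.map_congr rfl fun v hv => by simp [hM v hv, hc]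
  · exact Multiset.sum_eq_zero fun x hx => by
      obtain ⟨v, hv, rfl⟩ := Multiset.mem_map.mp hx
      simp [hM v hv, hc]

theorem appScore_le_of_replace_block {X A B : Multiset (ℕ × Finset C)} {S : Finset C} {p c : C}
    (hpS : p ∈ S) (hA : ∀ v ∈ A, v.2 = S) (hB : ∀ v ∈ B, v.2 = S)
    (hweight : (A.map Prod.fst).sum ≤ (B.map Prod.fst).sum)
    (hwin : appScore (X + A) c ≤ appScore (X + A) p) :
    appScore (X + B) c ≤ appScore (X + B) p := by
  simp only [appScore_add, appScore_of_forall_approves_eq hA,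
    appScore_of_forall_approves_eq hB, hpS, if_true] at hwin ⊢
  split_ifs at hwin ⊢ <;> omega

end appScore

theorem stmt9_general {C : Type*} [DecidableEq C]
    (V W : Multiset (ℕ × Finset C)) (p : C)
    (S : Finset C) (hpS : p ∈ S)
    (W' rest H : Multiset (ℕ × Finset C)) (ℓ : ℕ)
    (hW'sub : W' ≤ W.filter (fun w => w.2 = S))
    (hW'card : Multiset.card W' = ℓ)
    (hwin : ∀ c, appScore (V + W' + rest) c ≤ appScore (V + W' + rest) p)
    (hH : H ≤ W.filter (fun w => w.2 = S))
    (hHcard : Multiset.card H = ℓ)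
    (hheavy : ∀ h ∈ H, ∀ w ∈ W.filter (fun w => w.2 = S) - H, w.1 ≤ h.1) :
    ∀ c, appScore (V + H + rest) c ≤ appScore (V + H + rest) p := by
  have approves_S {M : Multiset (ℕ × Finset C)} (hM : M ≤ W.filter (fun w => w.2 = S)) :
      ∀ v ∈ M, v.2 = S := fun v hv => (Multiset.mem_filter.mp (Multiset.mem_of_le hM hv)).2
  have hweight : (W'.map Prod.fst).sum ≤ (H.map Prod.fst).sum :=
    Multiset.sum_map_le_sum_map_of_forall_le_of_card_eq Prod.fst hW'sub
      (hW'card.trans hHcard.symm) hheavy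
  intro c
  rw [add_right_comm] at hwin ⊢
  exact appScore_le_of_replace_block hpS (approves_S hW'sub) (approves_S hH) hweight (hwin c)

/-- In weighted `t`-approval, if some subcollection `W' ⊆ W` of size `ℓ`, all
of whose votes approve exactly the same size-`t` set `S ∋ p`, can be added (together with
other added voters `rest`, which do not approve exactly `S`) to make `p` a winner, then
replacing `W'` by the `ℓ` heaviest voters `H` of `W` approving exactly `S` (keeping `rest`
fixed) also makes `p` a winner. -/
theorem stmt9 {C : Type*} [DecidableEq C] (t : ℕ)
    (V W : Multiset (ℕ × Finset C)) (p : C)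
    (hW : ∀ w ∈ W, p ∈ w.2 ∧ w.2.card = t)
    (S : Finset C) (hpS : p ∈ S) (hS : S.card = t)
    (W' rest H : Multiset (ℕ × Finset C)) (ℓ : ℕ)
    (hW'sub : W' ≤ W.filter (fun w => w.2 = S))
    (hW'card : Multiset.card W' = ℓ)
    (hrest : rest ≤ W - W')
    (hrestS : ∀ w ∈ rest, w.2 ≠ S)
    (hwin : ∀ c, appScore (V + W' + rest) c ≤ appScore (V + W' + rest) p)
    (hH : H ≤ W.filter (fun w => w.2 = S))
    (hHcard : Multiset.card H = ℓ)
    (hheavy : ∀ h ∈ H, ∀ w ∈ W.filter (fun w => w.2 = S) - H, w.1 ≤ h.1) :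
    ∀ c, appScore (V + H + rest) c ≤ appScore (V + H + rest) p :=
  stmt9_general V W p S hpS W' rest H ℓ hW'sub hW'card hwin hH hHcard hheavy
end

section
/- GBW lower bound for t-approval WCCAV: for every t ≥ 2 there is an instance of weighted constructive control by adding voters under t-approval — namely, candidates {p, a_1,…,a_t, d_1,…,d_{t−1}}, one registered voter of weight 2t approving exactly {a_1,…,a_t}, one unregistered voter 'nice' of weight 2t approving {p, d_1,…,d_{t−1}}, and for each j ∈ {1,…,t} one unregistered voter α_j of weight 3t approving {p} ∪ {a_i : i ≠ j} — such that adding the single voter 'nice' makes p a winner, while adding any proper subcollection of {α_1,…,α_t} (and no other voters) fails to make p a winner but adding all t voters α_1,…,α_t makes p a winner. -/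
/-- The `2t` candidates: `none` is the preferred candidate `p`, `some (inl i)` is `a_i`
(for `i : Fin t`), and `some (inr j)` is `d_j` (for `j : Fin (t-1)`). -/
def Cand13 (t : ℕ) : Type := Option (Fin t ⊕ Fin (t - 1))

instance (t : ℕ) : DecidableEq (Cand13 t) := by unfold Cand13; infer_instance

/-- Approval score: total weight of voters approving candidate `c`. -/
def appScore13 {t : ℕ} (M : Multiset (ℕ × Finset (Cand13 t))) (c : Cand13 t) : ℕ :=
  (M.map (fun u => if c ∈ u.2 then u.1 else 0)).sum

/-- The single registered voter: weight `2t`, approving exactly `{a_1,…,a_t}`. -/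
def reg13 (t : ℕ) : Multiset (ℕ × Finset (Cand13 t)) :=
  {(2 * t, Finset.univ.image (fun i : Fin t => (some (Sum.inl i) : Cand13 t)))}

/-- The unregistered voter `nice`: weight `2t`, approving `{p, d_1,…,d_{t-1}}`. -/
def nice13 (t : ℕ) : ℕ × Finset (Cand13 t) :=
  (2 * t, insert (none : Cand13 t)
    (Finset.univ.image (fun j : Fin (t - 1) => (some (Sum.inr j) : Cand13 t))))

/-- The unregistered voter `α_j`: weight `3t`, approving `{p} ∪ {a_i : i ≠ j}`. -/
def alpha13 (t : ℕ) (j : Fin t) : ℕ × Finset (Cand13 t) :=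
  (3 * t, insert (none : Cand13 t)
    ((Finset.univ.erase j).image (fun i : Fin t => (some (Sum.inl i) : Cand13 t))))

/-! Every `a_i` gets `2t` from the registered voter, and `α_j` gives `3t` to `p` and to every
`a_i` except `a_j`. If some `α_i` is missing, `a_i` keeps pace with `p` on the added voters and
leads by `2t`; with all of them, each `a_i` falls `3t` behind `p` there, which outweighs `2t`.
The voter `nice` instead raises `p` and every `d_j` to `2t`, the score of every `a_i`. -/

open Finset

namespace Cand13

variable {t : ℕ}

/- `(none : Cand13 t)` still elaborates at type `Option _`, so the `insert none _` in the
definitions above is not an insertion into `Finset (Cand13 t)` as far as `rw` and `simp` are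
concerned. Stating the voters through `p`, `a`, `d`, typed at `Cand13 t`, repairs this. -/

def p : Cand13 t := none

def a (i : Fin t) : Cand13 t := some (Sum.inl i)

def d (j : Fin (t - 1)) : Cand13 t := some (Sum.inr j)

lemma a_injective : Function.Injective (a : Fin t → Cand13 t) :=
  fun _ _ h => Sum.inl_injective (Option.some_injective _ h)

@[simp] lemma a_ne_p (i : Fin t) : a i ≠ p := Option.some_ne_none _

@[simp] lemma d_ne_p (j : Fin (t - 1)) : d j ≠ p := Option.some_ne_none _

@[simp] lemma a_ne_d (i : Fin t) (j : Fin (t - 1)) : a i ≠ d j :=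
  fun h => Sum.inl_ne_inr (Option.some_injective _ h)

@[simp] lemma d_ne_a (j : Fin (t - 1)) (i : Fin t) : d j ≠ a i := (a_ne_d i j).symm

lemma eq_p_or_eq_a_or_eq_d (c : Cand13 t) : c = p ∨ (∃ i, c = a i) ∨ ∃ j, c = d j := by
  rcases c with _ | i | j
  exacts [Or.inl rfl, Or.inr (Or.inl ⟨i, rfl⟩), Or.inr (Or.inr ⟨j, rfl⟩)]

end Cand13

open Cand13

lemma reg13_eq (t : ℕ) : reg13 t = {(2 * t, univ.image a)} := rfl

lemma nice13_eq (t : ℕ) : nice13 t = (2 * t, insert p (univ.image d)) := rfl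

lemma alpha13_eq (t : ℕ) (j : Fin t) :
    alpha13 t j = (3 * t, insert p ((univ.erase j).image a)) := rfl

lemma appScore13_add {t : ℕ} (M N : Multiset (ℕ × Finset (Cand13 t))) (c : Cand13 t) :
    appScore13 (M + N) c = appScore13 M c + appScore13 N c := by
  simp [appScore13]

lemma appScore13_singleton {t : ℕ} (u : ℕ × Finset (Cand13 t)) (c : Cand13 t) :
    appScore13 {u} c = if c ∈ u.2 then u.1 else 0 := by
  simp [appScore13]

lemma appScore13_map {t : ℕ} {ι : Type*} (J : Finset ι) (f : ι → ℕ × Finset (Cand13 t))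
    (c : Cand13 t) :
    appScore13 (J.val.map f) c = ∑ j ∈ J, if c ∈ (f j).2 then (f j).1 else 0 := by
  rw [appScore13, Multiset.map_map]
  rfl

section Scores

variable {t : ℕ}

@[simp] lemma appScore13_reg13_p : appScore13 (reg13 t) p = 0 := by
  simp [reg13_eq, appScore13_singleton]

@[simp] lemma appScore13_reg13_a (i : Fin t) : appScore13 (reg13 t) (a i) = 2 * t := by
  simp [reg13_eq, appScore13_singleton, a_injective.mem_finset_image]

@[simp] lemma appScore13_reg13_d (j : Fin (t - 1)) : appScore13 (reg13 t) (d j) = 0 := by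
  simp [reg13_eq, appScore13_singleton]

@[simp] lemma appScore13_nice13_p : appScore13 {nice13 t} p = 2 * t := by
  simp [nice13_eq, appScore13_singleton]

@[simp] lemma appScore13_nice13_a (i : Fin t) : appScore13 {nice13 t} (a i) = 0 := by
  simp [nice13_eq, appScore13_singleton]

@[simp] lemma appScore13_nice13_d (j : Fin (t - 1)) : appScore13 {nice13 t} (d j) = 2 * t := by
  simp [nice13_eq, appScore13_singleton]

@[simp] lemma appScore13_map_alpha13_p (J : Finset (Fin t)) :
    appScore13 (J.val.map (alpha13 t)) p = 3 * t * #J := by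
  simp [appScore13_map, alpha13_eq, mul_comm]

@[simp] lemma appScore13_map_alpha13_a (J : Finset (Fin t)) (i : Fin t) :
    appScore13 (J.val.map (alpha13 t)) (a i) = 3 * t * #(J.erase i) := by
  simp [appScore13_map, alpha13_eq, a_injective.mem_finset_image, sum_ite, filter_ne, mul_comm]

@[simp] lemma appScore13_map_alpha13_d (J : Finset (Fin t)) (j : Fin (t - 1)) :
    appScore13 (J.val.map (alpha13 t)) (d j) = 0 := by
  simp [appScore13_map, alpha13_eq]

end Scores

def IsPWinner {t : ℕ} (M : Multiset (ℕ × Finset (Cand13 t))) : Prop :=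
  ∀ c, appScore13 M c ≤ appScore13 M p

lemma isPWinner_reg13_add_nice13 (t : ℕ) : IsPWinner (reg13 t + {nice13 t}) := by
  intro c
  obtain rfl | ⟨i, rfl⟩ | ⟨j, rfl⟩ := eq_p_or_eq_a_or_eq_d c <;> simp [appScore13_add]

lemma not_isPWinner_reg13_add_alpha13 {t : ℕ} (ht : 0 < t) {J : Finset (Fin t)}
    (hJ : J ≠ univ) : ¬ IsPWinner (reg13 t + J.val.map (alpha13 t)) := by
  obtain ⟨i, hi⟩ : ∃ i, i ∉ J := by simpa [eq_univ_iff_forall] using hJ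
  intro hwin
  have hle := hwin (a i)
  simp only [appScore13_add, appScore13_reg13_a, appScore13_reg13_p, appScore13_map_alpha13_a,
    appScore13_map_alpha13_p, erase_eq_of_notMem hi] at hle
  omega

lemma isPWinner_reg13_add_univ_alpha13 (t : ℕ) :
    IsPWinner (reg13 t + (univ : Finset (Fin t)).val.map (alpha13 t)) := by
  intro c
  obtain rfl | ⟨i, rfl⟩ | ⟨j, rfl⟩ := eq_p_or_eq_a_or_eq_d c
  · exact le_rfl
  · have ht : 0 < t := i.pos
    simp only [appScore13_add, appScore13_reg13_a, appScore13_reg13_p, appScore13_map_alpha13_a,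
      appScore13_map_alpha13_p, card_erase_of_mem (mem_univ i), card_univ, Fintype.card_fin]
    have hsplit : 3 * t * t = 3 * t * (t - 1) + 3 * t := by
      rw [← Nat.mul_add_one, Nat.sub_add_cancel ht]
    omega
  · simp only [appScore13_add, appScore13_reg13_d, appScore13_map_alpha13_d]
    exact Nat.zero_le _

/-- GBW lower bound for `t`-approval WCCAV (`t ≥ 2`): adding the single voter
`nice` makes `p` a winner; adding any proper subcollection of `{α_1,…,α_t}` (and nothing
else) fails to make `p` a winner; but adding all `t` voters `α_1,…,α_t` makes `p` a winner. -/
theorem stmt13 (t : ℕ) (ht : 2 ≤ t) :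
    (∀ c, appScore13 (reg13 t + {nice13 t}) c ≤ appScore13 (reg13 t + {nice13 t}) none) ∧
    (∀ J : Finset (Fin t), J ≠ Finset.univ →
      ¬ (∀ c, appScore13 (reg13 t + J.val.map (alpha13 t)) c ≤
              appScore13 (reg13 t + J.val.map (alpha13 t)) none)) ∧
    (∀ c, appScore13 (reg13 t + (Finset.univ : Finset (Fin t)).val.map (alpha13 t)) c ≤
          appScore13 (reg13 t + (Finset.univ : Finset (Fin t)).val.map (alpha13 t)) none) :=
  ⟨isPWinner_reg13_add_nice13 t, fun _ hJ => not_isPWinner_reg13_add_alpha13 (by omega) hJ,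
    isPWinner_reg13_add_univ_alpha13 t⟩
end

section
/- In the WCCDV-for-2-approval hardness construction from X3C′, the forward direction holds: if 𝒮 contains an exact cover of B (t sets whose union is B), then deleting the n−t weight-2 voters corresponding to sets not in the cover together with the 3t weight-1 voters corresponding to the sets in the cover (one per element occurrence used by the cover) makes p a winner: afterwards score(p) = 2 is unchanged, each score(s_i) decreases by at least 2 to at most 2, each score(s'_i) decreases to at most 2, each score(b_j) decreases by 1 to 2, and each dummy d_j has score at most 2. -/
/-- Candidates for the X3C′-based WCCDV-for-2-approval construction: `none` is `p`;
`some (inl j)` is `b_j`; `some (inr (inl i))` is `s_i`; `some (inr (inr (inl i)))` is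
`s'_i`; `some (inr (inr (inr j)))` is the dummy `d_j` (`j : Fin (3t+1)`). -/
def Cand14 (t n : ℕ) : Type :=
  Option (Fin (3 * t) ⊕ Fin n ⊕ Fin n ⊕ Fin (3 * t + 1))

instance (t n : ℕ) : DecidableEq (Cand14 t n) := by unfold Cand14; infer_instance

def pC {t n : ℕ} : Cand14 t n := none
def bC {t n : ℕ} (j : Fin (3 * t)) : Cand14 t n := some (Sum.inl j)
def sC {t n : ℕ} (i : Fin n) : Cand14 t n := some (Sum.inr (Sum.inl i))
def s'C {t n : ℕ} (i : Fin n) : Cand14 t n := some (Sum.inr (Sum.inr (Sum.inl i)))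
def dC {t n : ℕ} (j : Fin (3 * t + 1)) : Cand14 t n := some (Sum.inr (Sum.inr (Sum.inr j)))

/-- Approval score: total weight of voters approving candidate `c`. -/
def appScore14 {t n : ℕ} (M : Multiset (ℕ × Finset (Cand14 t n))) (c : Cand14 t n) : ℕ :=
  (M.map (fun u => if c ∈ u.2 then u.1 else 0)).sum

/-- The voters associated with the set `S_i = {b_{e i 0}, b_{e i 1}, b_{e i 2}}`:
one weight-2 voter approving `{s_i, s'_i}` and three weight-1 voters approving
`{s_i, b_{i1}}`, `{s_i, b_{i2}}`, `{s'_i, b_{i3}}`. -/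
def perSet14 (t n : ℕ) (e : Fin n → Fin 3 → Fin (3 * t)) (i : Fin n) :
    Multiset (ℕ × Finset (Cand14 t n)) :=
  {(2, {sC i, s'C i}), (1, {sC i, bC (e i 0)}), (1, {sC i, bC (e i 1)}),
   (1, {s'C i, bC (e i 2)})}

/-- The whole election: the per-set voters, one weight-2 voter approving `{p, d_0}`, and
for each `j`, `3 − ℓ_j` weight-1 voters approving `{b_j, d_{j+1}}`, where `ℓ_j` is the
number of sets containing `b_j`. -/
def election14 (t n : ℕ) (S : Fin n → Finset (Fin (3 * t)))
    (e : Fin n → Fin 3 → Fin (3 * t)) : Multiset (ℕ × Finset (Cand14 t n)) :=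
  (∑ i, perSet14 t n e i) + {(2, ({pC, dC 0} : Finset (Cand14 t n)))} +
    ∑ j : Fin (3 * t),
      Multiset.replicate (3 - (Finset.univ.filter (fun i => j ∈ S i)).card)
        (1, ({bC j, dC j.succ} : Finset (Cand14 t n)))

/-- The deleted voters: the weight-2 voters `{s_i, s'_i}` for the sets not in the cover
`I`, and the three weight-1 voters for each set in the cover. -/
def deleted14 (t n : ℕ) (e : Fin n → Fin 3 → Fin (3 * t)) (I : Finset (Fin n)) :
    Multiset (ℕ × Finset (Cand14 t n)) :=
  ((Finset.univ \ I).val.map (fun i => (2, ({sC i, s'C i} : Finset (Cand14 t n))))) +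
  (I.val.map (fun i => (1, ({sC i, bC (e i 0)} : Finset (Cand14 t n))))) +
  (I.val.map (fun i => (1, ({sC i, bC (e i 1)} : Finset (Cand14 t n))))) +
  (I.val.map (fun i => (1, ({s'C i, bC (e i 2)} : Finset (Cand14 t n)))))

/-! Deleting voters lowers each candidate's score by the total weight of the deleted voters
approving it. Initially `p` has score 2, `s_i` has 4, `s'_i` has 3, `b_j` has 3 and every dummy
at most 2. Each `s_i` loses 2 (its weight-2 voter if `S_i` is not in the cover, its two
weight-1 voters if it is) and each `s'_i` loses at least 1. Since `t` sets of size 3 cover the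
`3t` elements, the cover is exact: every `b_j` lies in exactly one chosen set, and so loses
exactly 1. -/

open Finset

section Candidates

variable {t n : ℕ} {i i' : Fin n} {j j' : Fin (3 * t)} {k k' : Fin (3 * t + 1)}

@[simp] lemma sC_inj : sC (t := t) i = sC i' ↔ i = i' :=
  ⟨by rintro ⟨⟩; rfl, by rintro rfl; rfl⟩
@[simp] lemma s'C_inj : s'C (t := t) i = s'C i' ↔ i = i' :=
  ⟨by rintro ⟨⟩; rfl, by rintro rfl; rfl⟩
@[simp] lemma bC_inj : bC (n := n) j = bC j' ↔ j = j' :=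
  ⟨by rintro ⟨⟩; rfl, by rintro rfl; rfl⟩
@[simp] lemma dC_inj : dC (n := n) k = dC k' ↔ k = k' :=
  ⟨by rintro ⟨⟩; rfl, by rintro rfl; rfl⟩

@[simp] lemma pC_ne_sC : pC (t := t) ≠ sC i := nofun
@[simp] lemma pC_ne_s'C : pC (t := t) ≠ s'C i := nofun
@[simp] lemma pC_ne_bC : pC (n := n) ≠ bC j := nofun
@[simp] lemma pC_ne_dC : pC (n := n) ≠ dC k := nofun
@[simp] lemma sC_ne_pC : sC (t := t) i ≠ pC := nofun
@[simp] lemma sC_ne_s'C : sC (t := t) i ≠ s'C i' := nofun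
@[simp] lemma sC_ne_bC : sC i ≠ bC j := nofun
@[simp] lemma sC_ne_dC : sC i ≠ dC k := nofun
@[simp] lemma s'C_ne_pC : s'C (t := t) i ≠ pC := nofun
@[simp] lemma s'C_ne_sC : s'C (t := t) i ≠ sC i' := nofun
@[simp] lemma s'C_ne_bC : s'C i ≠ bC j := nofun
@[simp] lemma s'C_ne_dC : s'C i ≠ dC k := nofun
@[simp] lemma bC_ne_pC : bC (n := n) j ≠ pC := nofun
@[simp] lemma bC_ne_sC : bC j ≠ sC i := nofun
@[simp] lemma bC_ne_s'C : bC j ≠ s'C i := nofun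
@[simp] lemma bC_ne_dC : bC (n := n) j ≠ dC k := nofun
@[simp] lemma dC_ne_pC : dC (n := n) k ≠ pC := nofun
@[simp] lemma dC_ne_sC : dC k ≠ sC i := nofun
@[simp] lemma dC_ne_s'C : dC k ≠ s'C i := nofun
@[simp] lemma dC_ne_bC : dC (n := n) k ≠ bC j := nofun

end Candidates

section Score

variable {t n : ℕ} (c : Cand14 t n)

@[simp] lemma appScore14_add (M N : Multiset (ℕ × Finset (Cand14 t n))) :
    appScore14 (M + N) c = appScore14 M c + appScore14 N c := by
  simp [appScore14]

@[simp] lemma appScore14_cons (v : ℕ × Finset (Cand14 t n))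
    (M : Multiset (ℕ × Finset (Cand14 t n))) :
    appScore14 (v ::ₘ M) c = (if c ∈ v.2 then v.1 else 0) + appScore14 M c := by
  simp [appScore14]

@[simp] lemma appScore14_singleton (v : ℕ × Finset (Cand14 t n)) :
    appScore14 {v} c = if c ∈ v.2 then v.1 else 0 := by
  simp [appScore14]

@[simp] lemma appScore14_replicate (m : ℕ) (v : ℕ × Finset (Cand14 t n)) :
    appScore14 (Multiset.replicate m v) c = m * if c ∈ v.2 then v.1 else 0 := by
  simp [appScore14]

@[simp] lemma appScore14_map {ι : Type*} (s : Finset ι) (f : ι → ℕ × Finset (Cand14 t n)) :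
    appScore14 (s.val.map f) c = ∑ i ∈ s, if c ∈ (f i).2 then (f i).1 else 0 := by
  simp [appScore14, Multiset.map_map]

@[simp] lemma appScore14_sum {ι : Type*} (s : Finset ι)
    (M : ι → Multiset (ℕ × Finset (Cand14 t n))) :
    appScore14 (∑ i ∈ s, M i) c = ∑ i ∈ s, appScore14 (M i) c :=
  map_sum ({ toFun := (appScore14 · c), map_zero' := rfl, map_add' := (appScore14_add c) } :
    Multiset (ℕ × Finset (Cand14 t n)) →+ ℕ) M s

lemma appScore14_tsub {M N : Multiset (ℕ × Finset (Cand14 t n))} (h : N ≤ M) :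
    appScore14 (M - N) c = appScore14 M c - appScore14 N c := by
  conv_rhs => rw [← add_tsub_cancel_of_le h, appScore14_add]
  omega

end Score

theorem Function.Injective.sum_ite_eq_apply {κ α : Type*} [Fintype κ] [DecidableEq α]
    {f : κ → α} (hf : f.Injective) (a : α) :
    (∑ k, if a = f k then 1 else 0 : ℕ) = if a ∈ univ.image f then 1 else 0 := by
  classical
  split_ifs with ha
  · obtain ⟨k, -, rfl⟩ := mem_image.1 ha
    simp [hf.eq_iff]
  · refine sum_eq_zero fun k _ => if_neg ?_
    rintro rfl
    exact ha (mem_image_of_mem f (mem_univ k))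

lemma sum_sum_ite_eq_card_filter_mem {ι κ α : Type*} [Fintype κ] [DecidableEq α]
    {S : ι → Finset α} {e : ι → κ → α} (hSe : ∀ i, S i = univ.image (e i))
    (he : ∀ i, (e i).Injective) (s : Finset ι) (a : α) :
    ∑ i ∈ s, ∑ k, (if a = e i k then 1 else 0) = #{i ∈ s | a ∈ S i} := by
  simp only [(he _).sum_ite_eq_apply, ← hSe, card_filter]

lemma card_filter_mem_eq_one_of_cover {ι α : Type*} [Fintype α] [DecidableEq α]
    {S : ι → Finset α} {I : Finset ι} (hcover : ∀ a, ∃ i ∈ I, a ∈ S i)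
    (hcard : ∑ i ∈ I, #(S i) ≤ Fintype.card α) (a : α) : #{i ∈ I | a ∈ S i} = 1 := by
  have hpos : ∀ a, 1 ≤ #{i ∈ I | a ∈ S i} := fun a =>
    let ⟨i, hi, ha⟩ := hcover a
    card_pos.2 ⟨i, mem_filter.2 ⟨hi, ha⟩⟩
  have hcount : ∑ a, #{i ∈ I | a ∈ S i} = ∑ i ∈ I, #(S i) := by
    simp only [card_filter]
    rw [sum_comm]
    simp
  refine ((sum_eq_sum_iff_of_le fun a _ => hpos a).1 (le_antisymm ?_ ?_) a (mem_univ a)).symm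
  · exact sum_le_sum fun a _ => hpos a
  · simpa [hcount] using hcard

lemma Finset.sum_singleton_eq_map_val {ι β : Type*} (s : Finset ι) (f : ι → β) :
    ∑ i ∈ s, ({f i} : Multiset β) = s.val.map f := by
  simpa [Multiset.map_map] using Multiset.sum_map_singleton (s.val.map f)

section Construction

variable {t n : ℕ} {S : Fin n → Finset (Fin (3 * t))} {e : Fin n → Fin 3 → Fin (3 * t)}
  {I : Finset (Fin n)}

lemma sum_perSet14 : ∑ i, perSet14 t n e i =
    univ.val.map (fun i => (2, ({sC i, s'C i} : Finset (Cand14 t n)))) +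
    univ.val.map (fun i => (1, ({sC i, bC (e i 0)} : Finset (Cand14 t n)))) +
    univ.val.map (fun i => (1, ({sC i, bC (e i 1)} : Finset (Cand14 t n)))) +
    univ.val.map (fun i => (1, ({s'C i, bC (e i 2)} : Finset (Cand14 t n)))) := by
  simp only [perSet14, Multiset.insert_eq_cons, ← Multiset.singleton_add, sum_add_distrib,
    sum_singleton_eq_map_val, add_assoc]

lemma deleted14_le_election14 : deleted14 t n e I ≤ election14 t n S e := by
  calc deleted14 t n e I ≤ ∑ i, perSet14 t n e i := by
        rw [sum_perSet14, deleted14]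
        gcongr <;> exact val_le_iff.2 (subset_univ _)
    _ ≤ election14 t n S e := by
        rw [election14, add_assoc]
        exact le_add_right le_rfl

lemma appScore14_election14_pC : appScore14 (election14 t n S e) pC = 2 := by
  simp [election14, perSet14]

lemma appScore14_election14_sC (i : Fin n) : appScore14 (election14 t n S e) (sC i) = 4 := by
  simp [election14, perSet14, sum_add_distrib]

lemma appScore14_election14_s'C (i : Fin n) : appScore14 (election14 t n S e) (s'C i) = 3 := by
  simp [election14, perSet14, sum_add_distrib]

lemma appScore14_election14_bC (hSe : ∀ i, S i = univ.image (e i))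
    (heInj : ∀ i, (e i).Injective) (hS : ∀ j, #{i | j ∈ S i} ≤ 3) (j : Fin (3 * t)) :
    appScore14 (election14 t n S e) (bC j) = 3 := by
  have hocc := sum_sum_ite_eq_card_filter_mem hSe heInj univ j
  rw [sum_comm, Fin.sum_univ_three] at hocc
  simp [election14, perSet14, sum_add_distrib] at hocc ⊢
  have := hS j
  omega

lemma appScore14_election14_dC (hS : ∀ j, 1 ≤ #{i | j ∈ S i}) (k : Fin (3 * t + 1)) :
    appScore14 (election14 t n S e) (dC k) ≤ 2 := by
  cases k using Fin.cases with
  | zero => simp [election14, perSet14, (Fin.succ_ne_zero _).symm]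
  | succ k =>
    have := hS k
    simp [election14, perSet14]
    omega

lemma appScore14_deleted14_pC : appScore14 (deleted14 t n e I) pC = 0 := by
  simp [deleted14, -sdiff_val]

lemma appScore14_deleted14_sC (i : Fin n) : appScore14 (deleted14 t n e I) (sC i) = 2 := by
  simp [deleted14, -sdiff_val]
  split_ifs <;> rfl

lemma appScore14_deleted14_s'C (i : Fin n) :
    appScore14 (deleted14 t n e I) (s'C i) = if i ∈ I then 1 else 2 := by
  simp [deleted14, -sdiff_val]
  split_ifs <;> rfl

lemma appScore14_deleted14_bC (hSe : ∀ i, S i = univ.image (e i))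
    (heInj : ∀ i, (e i).Injective) (j : Fin (3 * t)) :
    appScore14 (deleted14 t n e I) (bC j) = #{i ∈ I | j ∈ S i} := by
  rw [← sum_sum_ite_eq_card_filter_mem hSe heInj I j, sum_comm, Fin.sum_univ_three]
  simp [deleted14, -sdiff_val]

lemma appScore14_deleted14_dC (k : Fin (3 * t + 1)) :
    appScore14 (deleted14 t n e I) (dC k) = 0 := by
  simp [deleted14, -sdiff_val]

lemma appScore14_election14_sub_deleted14 (c : Cand14 t n) :
    appScore14 (election14 t n S e - deleted14 t n e I) c =
      appScore14 (election14 t n S e) c - appScore14 (deleted14 t n e I) c :=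
  appScore14_tsub c deleted14_le_election14

end Construction

/-- forward direction of the WCCDV-for-2-approval hardness construction from
X3C′: if `I` is an exact cover (`|I| = t`, every `b_j` covered), then deleting the `n − t`
weight-2 voters for the sets not in the cover together with the `3t` weight-1 voters for
the sets in the cover makes `p` a winner: afterwards `score(p) = 2`, each `score(s_i) ≤ 2`,
each `score(s'_i) ≤ 2`, each `score(b_j) = 2`, each dummy has score at most 2. -/
theorem stmt14 (t n : ℕ) (S : Fin n → Finset (Fin (3 * t)))
    (e : Fin n → Fin 3 → Fin (3 * t))
    (hSe : ∀ i, S i = Finset.univ.image (e i))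
    (heInj : ∀ i, Function.Injective (e i))
    (hocc : ∀ j : Fin (3 * t), 1 ≤ (Finset.univ.filter (fun i => j ∈ S i)).card ∧
        (Finset.univ.filter (fun i => j ∈ S i)).card ≤ 3)
    (I : Finset (Fin n)) (hI : I.card = t)
    (hcover : ∀ j : Fin (3 * t), ∃ i ∈ I, j ∈ S i) :
    appScore14 (election14 t n S e - deleted14 t n e I) pC = 2 ∧
    (∀ i, appScore14 (election14 t n S e - deleted14 t n e I) (sC i) ≤ 2) ∧
    (∀ i, appScore14 (election14 t n S e - deleted14 t n e I) (s'C i) ≤ 2) ∧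
    (∀ j, appScore14 (election14 t n S e - deleted14 t n e I) (bC j) = 2) ∧
    (∀ j, appScore14 (election14 t n S e - deleted14 t n e I) (dC j) ≤ 2) ∧
    (∀ c, appScore14 (election14 t n S e - deleted14 t n e I) c ≤
          appScore14 (election14 t n S e - deleted14 t n e I) pC) := by
  have hexact : ∀ j, #{i ∈ I | j ∈ S i} = 1 := by
    refine card_filter_mem_eq_one_of_cover hcover (le_of_eq ?_)
    simp [hSe, card_image_of_injective _ (heInj _), hI, mul_comm]
  set R := election14 t n S e - deleted14 t n e I with hR
  have hp : appScore14 R pC = 2 := by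
    rw [hR, appScore14_election14_sub_deleted14, appScore14_election14_pC,
      appScore14_deleted14_pC]
  have hs : ∀ i, appScore14 R (sC i) ≤ 2 := fun i => by
    rw [hR, appScore14_election14_sub_deleted14, appScore14_election14_sC,
      appScore14_deleted14_sC]
  have hs' : ∀ i, appScore14 R (s'C i) ≤ 2 := fun i => by
    rw [hR, appScore14_election14_sub_deleted14, appScore14_election14_s'C,
      appScore14_deleted14_s'C]
    split_ifs <;> decide
  have hb : ∀ j, appScore14 R (bC j) = 2 := fun j => by
    rw [hR, appScore14_election14_sub_deleted14,
      appScore14_election14_bC hSe heInj (fun j => (hocc j).2), appScore14_deleted14_bC hSe heInj,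
      hexact]
  have hd : ∀ k, appScore14 R (dC k) ≤ 2 := fun k => by
    rw [hR, appScore14_election14_sub_deleted14, appScore14_deleted14_dC, Nat.sub_zero]
    exact appScore14_election14_dC (fun j => (hocc j).1) k
  refine ⟨hp, hs, hs', hb, hd, fun c => hp ▸ ?_⟩
  obtain _ | j | i | i | k := c
  exacts [hp.le, (hb j).le, hs i, hs' i, hd k]
end

section
/- GBW sum bound for t-veto WCCAV: let gaps g_c = score(c) − score(p) > 0 be defined for the candidates c with initial surplus, and for each such c let i_c be the minimum size of a sub-multiset of the unregistered voters vetoing c whose total weight is at least g_c (assume each i_c exists). Then every set A of unregistered voters whose addition makes p a winner satisfies, for each such c, |{v ∈ A : v vetoes c}| ≥ i_c; and since each added vote vetoes at most t candidates, t·|A| ≥ Σ_c i_c, i.e., |A| ≥ (Σ_c i_c)/t. -/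
/-! Every added voter approves `p`, so adding `A` raises `score p` by the total weight of `A`
and `score c` by that weight minus the weight of the voters of `A` vetoing `c`. Hence if `p`
wins after adding `A`, the voters of `A` vetoing `c` carry weight at least `g_c`, and by
minimality of `i_c` there are at least `i_c` of them. Counting the pairs (voter, vetoed
candidate) of `A` gives `Σ_c i_c ≤ Σ_{u ∈ A} |vetoes u| ≤ t·|A|`. -/

/-- `t`-veto score: total weight of voters not vetoing `c`; each voter is a pair
(weight, veto set). -/
def vetoScore {C : Type*} [DecidableEq C] (M : Multiset (ℕ × Finset C)) (c : C) : ℕ :=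
  (M.map (fun v => if c ∈ v.2 then 0 else v.1)).sum

section VetoScore

variable {C : Type*} [DecidableEq C]

@[simp]
lemma vetoScore_cons (u : ℕ × Finset C) (M : Multiset (ℕ × Finset C)) (c : C) :
    vetoScore (u ::ₘ M) c = (if c ∈ u.2 then 0 else u.1) + vetoScore M c := by
  simp [vetoScore]

lemma vetoScore_add (M N : Multiset (ℕ × Finset C)) (c : C) :
    vetoScore (M + N) c = vetoScore M c + vetoScore N c := by
  simp [vetoScore, Multiset.map_add]

lemma vetoScore_add_weight_filter_mem (A : Multiset (ℕ × Finset C)) (c : C) :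
    vetoScore A c + ((A.filter (fun u => c ∈ u.2)).map Prod.fst).sum = (A.map Prod.fst).sum := by
  induction A using Multiset.induction with
  | empty => rfl
  | cons u A ih =>
    by_cases hc : c ∈ u.2 <;>
      simp only [Multiset.filter_cons, hc, vetoScore_cons, Multiset.map_cons, Multiset.sum_cons,
        if_true, if_false, Multiset.singleton_add, Multiset.zero_add] <;>
      rw [← ih] <;> ring

lemma vetoScore_eq_weight_of_forall_not_mem {A : Multiset (ℕ × Finset C)} {p : C}
    (hA : ∀ u ∈ A, p ∉ u.2) : vetoScore A p = (A.map Prod.fst).sum := by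
  have := vetoScore_add_weight_filter_mem A p
  rwa [Multiset.filter_eq_nil.mpr hA, Multiset.map_zero, Multiset.sum_zero, add_zero] at this

lemma surplus_le_weight_filter_mem_of_wins {V A : Multiset (ℕ × Finset C)} {p c : C}
    (hA : ∀ u ∈ A, p ∉ u.2) (hwin : vetoScore (V + A) c ≤ vetoScore (V + A) p) :
    vetoScore V c - vetoScore V p ≤ ((A.filter (fun u => c ∈ u.2)).map Prod.fst).sum := by
  rw [vetoScore_add, vetoScore_add, vetoScore_eq_weight_of_forall_not_mem hA] at hwin
  have := vetoScore_add_weight_filter_mem A c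
  omega

end VetoScore

lemma sum_card_filter_mem_eq_sum_card {C α : Type*} [Fintype C] [DecidableEq C]
    (A : Multiset (α × Finset C)) :
    ∑ c : C, Multiset.card (A.filter (fun u => c ∈ u.2)) = (A.map (fun u => u.2.card)).sum := by
  induction A using Multiset.induction with
  | empty => simp
  | cons u A ih =>
    simp only [Multiset.filter_cons, Multiset.card_add, Finset.sum_add_distrib, ih,
      Multiset.map_cons, Multiset.sum_cons, apply_ite Multiset.card, Multiset.card_singleton,
      Multiset.card_zero, Finset.sum_boole, Finset.filter_mem_eq_inter, Finset.univ_inter,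
      Nat.cast_id]

lemma sum_card_filter_mem_le_mul_card {C α : Type*} [Fintype C] [DecidableEq C] {t : ℕ}
    {A : Multiset (α × Finset C)} (hA : ∀ u ∈ A, u.2.card ≤ t) :
    ∑ c : C, Multiset.card (A.filter (fun u => c ∈ u.2)) ≤ t * Multiset.card A := by
  rw [sum_card_filter_mem_eq_sum_card, mul_comm, ← smul_eq_mul, ← Multiset.card_map (·.2.card)]
  exact Multiset.sum_le_card_nsmul _ _ (Multiset.forall_mem_map_iff.mpr hA)

/-- GBW sum bound for `t`-veto WCCAV. For each candidate `c` with initial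
surplus `g_c = score(c) − score(p) > 0`, let `i_c` be the minimum size of a sub-multiset of
the unregistered voters vetoing `c` whose total weight is at least `g_c` (assumed to
exist). Then any set `A` of unregistered voters whose addition makes `p` a winner contains
at least `i_c` voters vetoing `c`, for every such `c`; and since each vote vetoes at most
`t` candidates, `t·|A| ≥ Σ_c i_c`. -/
theorem stmt15 {C : Type*} [Fintype C] [DecidableEq C] (t : ℕ)
    (V U : Multiset (ℕ × Finset C)) (p : C)
    (hU : ∀ u ∈ U, u.2.card = t ∧ p ∉ u.2)
    (ic : C → ℕ)
    (hic : ∀ c : C, vetoScore V p < vetoScore V c →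
      (∃ S ≤ U.filter (fun u => c ∈ u.2), Multiset.card S = ic c ∧
        vetoScore V c - vetoScore V p ≤ (S.map Prod.fst).sum) ∧
      (∀ S ≤ U.filter (fun u => c ∈ u.2),
        vetoScore V c - vetoScore V p ≤ (S.map Prod.fst).sum →
        ic c ≤ Multiset.card S)) :
    ∀ A ≤ U, (∀ c, vetoScore (V + A) c ≤ vetoScore (V + A) p) →
      (∀ c, vetoScore V p < vetoScore V c →
        ic c ≤ Multiset.card (A.filter (fun u => c ∈ u.2))) ∧
      (∑ c ∈ Finset.univ.filter (fun c => vetoScore V p < vetoScore V c), ic c) ≤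
        t * Multiset.card A := by
  intro A hAU hwin
  have hA : ∀ u ∈ A, u.2.card = t ∧ p ∉ u.2 := fun u hu => hU u (Multiset.mem_of_le hAU hu)
  have hic_le : ∀ c, vetoScore V p < vetoScore V c →
      ic c ≤ Multiset.card (A.filter (fun u => c ∈ u.2)) := fun c hc =>
    (hic c hc).2 _ (Multiset.filter_le_filter _ hAU)
      (surplus_le_weight_filter_mem_of_wins (fun u hu => (hA u hu).2) (hwin c))
  refine ⟨hic_le, ?_⟩
  calc (∑ c ∈ Finset.univ.filter (fun c => vetoScore V p < vetoScore V c), ic c)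
      ≤ ∑ c ∈ Finset.univ.filter (fun c => vetoScore V p < vetoScore V c),
          Multiset.card (A.filter (fun u => c ∈ u.2)) :=
        Finset.sum_le_sum fun c hc => hic_le c (Finset.mem_filter.mp hc).2
    _ ≤ ∑ c : C, Multiset.card (A.filter (fun u => c ∈ u.2)) :=
        Finset.sum_le_sum_of_subset (Finset.filter_subset _ _)
    _ ≤ t * Multiset.card A :=
        sum_card_filter_mem_le_mul_card fun u hu => (hA u hu).1.le
end
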